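/- arXiv:0810.4003 — 3 statements merged into one kernel-verified Lean document; each statement's English description precedes it below -/
import Mathlib

section
/- The radial function u_min(x,y) = (1/2)(λ − (x²+y²))_+^{1/2} with λ = 2^{3/2} π^{-1/2} satisfies ∫_{ℝ²} u_min² dx dy = 1 and ∫_{ℝ²} ( (1/2)(x²+y²) u_min² + u_min⁴ ) dx dy = (π/24) λ³ = 3^{-1} 2^{3/2} π^{-1/2}. -/
open MeasureTheory Real

noncomputable def lamTF : ℝ := (2 : ℝ) ^ ((3 : ℝ) / 2) * Real.pi ^ (-(1 : ℝ) / 2)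

noncomputable def uminTF (p : ℝ × ℝ) : ℝ :=
  (1 / 2) * Real.sqrt (max (lamTF - (p.1 ^ 2 + p.2 ^ 2)) 0)

open Set in
lemma radial_integral (lam : ℝ) (hlam : 0 ≤ lam) (g : ℝ → ℝ) (hg : Continuous g)
    (h0 : ∀ s, lam ≤ s → g s = 0) :
    (∫ p : ℝ × ℝ, g (p.1 ^ 2 + p.2 ^ 2)) = Real.pi * ∫ s in (0:ℝ)..lam, g s := by
  have key := integral_comp_polarCoord_symm (fun p : ℝ × ℝ => g (p.1 ^ 2 + p.2 ^ 2))
  rw [← key]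
  have hsimp : ∀ p : ℝ × ℝ, p.1 • g ((polarCoord.symm p).1 ^ 2 + (polarCoord.symm p).2 ^ 2)
      = p.1 * g (p.1 ^ 2) := by
    intro p
    have : (p.1 * Real.cos p.2) ^ 2 + (p.1 * Real.sin p.2) ^ 2 = p.1 ^ 2 := by
      nlinarith [Real.sin_sq_add_cos_sq p.2]
    simp [polarCoord, this, smul_eq_mul]
  simp only [hsimp]
  -- integrability
  set F : ℝ × ℝ → ℝ := fun p => p.1 * g (p.1 ^ 2) with hF
  have hFc : Continuous F := continuous_fst.mul (hg.comp (continuous_fst.pow 2))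
  have hsl : (0:ℝ) ≤ Real.sqrt lam := Real.sqrt_nonneg _
  have hzero : ∀ x : ℝ, Real.sqrt lam < x → g (x ^ 2) = 0 := by
    intro x hx
    apply h0
    calc lam = Real.sqrt lam ^ 2 := (Real.sq_sqrt hlam).symm
    _ ≤ x ^ 2 := by nlinarith
  have h1 : IntegrableOn F (Ioc 0 (Real.sqrt lam) ×ˢ Ioo (-π) π) := by
    apply (hFc.continuousOn.integrableOn_compact
      ((isCompact_Icc (a := (0:ℝ)) (b := Real.sqrt lam)).prod
        (isCompact_Icc (a := -π) (b := π)))).mono_set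
    exact Set.prod_mono Ioc_subset_Icc_self Ioo_subset_Icc_self
  have h2 : IntegrableOn F (Ioi (Real.sqrt lam) ×ˢ Ioo (-π) π) := by
    have : EqOn F 0 (Ioi (Real.sqrt lam) ×ˢ Ioo (-π) π) := by
      rintro ⟨x, y⟩ ⟨hx, -⟩
      simp [hF, hzero x hx]
    rw [integrableOn_congr_fun this ((measurableSet_Ioi).prod measurableSet_Ioo)]
    exact integrableOn_zero
  have hint : IntegrableOn F (Ioi (0:ℝ) ×ˢ Ioo (-π) π) := by
    apply (h1.union h2).mono_set
    rintro ⟨x, y⟩ ⟨hx, hy⟩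
    rcases le_or_gt x (Real.sqrt lam) with h | h
    · exact Or.inl ⟨⟨hx, h⟩, hy⟩
    · exact Or.inr ⟨h, hy⟩
  have htarget : polarCoord.target = Ioi (0:ℝ) ×ˢ Ioo (-π) π := rfl
  rw [Measure.volume_eq_prod] at hint
  rw [htarget, Measure.volume_eq_prod, setIntegral_prod F hint]
  have hinner : ∀ x : ℝ, (∫ y in Ioo (-π) π, F (x, y)) = (2 * π) * (x * g (x ^ 2)) := by
    intro x
    simp only [hF]
    rw [setIntegral_const, Real.volume_real_Ioo, show π - -π = 2 * π by ring,
      max_eq_left (by positivity : (0:ℝ) ≤ 2 * π), smul_eq_mul]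
  simp only [hinner]
  rw [integral_const_mul]
  -- split Ioi 0
  have hsplit : Ioi (0:ℝ) = Ioc 0 (Real.sqrt lam) ∪ Ioi (Real.sqrt lam) := (Ioc_union_Ioi_eq_Ioi hsl).symm
  have hz2 : (∫ x in Ioi (Real.sqrt lam), x * g (x ^ 2)) = 0 := by
    apply setIntegral_eq_zero_of_forall_eq_zero
    intro x hx
    simp [hzero x hx]
  have h1' : IntegrableOn (fun x : ℝ => x * g (x ^ 2)) (Ioc 0 (Real.sqrt lam)) := by
    apply ContinuousOn.integrableOn_compact isCompact_Icc ?_ |>.mono_set Ioc_subset_Icc_self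
    exact (continuous_id.mul (hg.comp (continuous_pow 2))).continuousOn
  have h2' : IntegrableOn (fun x : ℝ => x * g (x ^ 2)) (Ioi (Real.sqrt lam)) := by
    have : EqOn (fun x : ℝ => x * g (x ^ 2)) 0 (Ioi (Real.sqrt lam)) := by
      intro x hx; simp [hzero x hx]
    rw [integrableOn_congr_fun this measurableSet_Ioi]
    exact integrableOn_zero
  rw [hsplit, setIntegral_union (Ioc_disjoint_Ioi le_rfl) measurableSet_Ioi h1' h2', hz2, add_zero]
  rw [← intervalIntegral.integral_of_le hsl]
  -- change of variables
  have hcv : (∫ x in (0:ℝ)..Real.sqrt lam, (2 * x) • g (x ^ 2)) = ∫ u in (0:ℝ)..lam, g u := by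
    have := intervalIntegral.integral_comp_smul_deriv (f := fun x : ℝ => x ^ 2)
      (f' := fun x : ℝ => 2 * x) (g := g) (a := 0) (b := Real.sqrt lam)
      (fun x _ => by simpa using (hasDerivAt_pow 2 x)) (by fun_prop) hg
    simpa [Real.sq_sqrt hlam] using this
  have : (∫ x in (0:ℝ)..Real.sqrt lam, x * g (x ^ 2))
      = (1/2) * ∫ x in (0:ℝ)..Real.sqrt lam, (2 * x) • g (x ^ 2) := by
    rw [← intervalIntegral.integral_const_mul]
    congr 1; funext x; simp [smul_eq_mul]; ring
  rw [this, hcv]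
  ring

lemma lamTF_pos : 0 < lamTF := by
  unfold lamTF
  positivity

lemma pow2_rpow : ((2:ℝ) ^ ((3:ℝ)/2)) ^ (2:ℕ) = 8 := by
  rw [← Real.rpow_natCast ((2:ℝ) ^ ((3:ℝ)/2)) 2, ← Real.rpow_mul (by norm_num : (0:ℝ) ≤ 2)]
  norm_num

lemma pow2_rpow3 : ((2:ℝ) ^ ((3:ℝ)/2)) ^ (3:ℕ) = 8 * (2:ℝ) ^ ((3:ℝ)/2) := by
  rw [← Real.rpow_natCast ((2:ℝ) ^ ((3:ℝ)/2)) 3, ← Real.rpow_mul (by norm_num : (0:ℝ) ≤ 2)]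
  rw [show (3:ℝ)/2 * (3:ℕ) = 3 + 3/2 by push_cast; ring, Real.rpow_add two_pos]
  rw [show (3:ℝ) = ((3:ℕ):ℝ) by norm_num, Real.rpow_natCast]
  norm_num

lemma powpi_rpow : (Real.pi ^ (-(1:ℝ)/2)) ^ (2:ℕ) = Real.pi⁻¹ := by
  rw [← Real.rpow_natCast (Real.pi ^ (-(1:ℝ)/2)) 2, ← Real.rpow_mul Real.pi_pos.le]
  norm_num [Real.rpow_neg_one]

lemma powpi_rpow3 : (Real.pi ^ (-(1:ℝ)/2)) ^ (3:ℕ) = Real.pi⁻¹ * Real.pi ^ (-(1:ℝ)/2) := by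
  rw [← Real.rpow_natCast (Real.pi ^ (-(1:ℝ)/2)) 3, ← Real.rpow_mul Real.pi_pos.le]
  rw [show (-(1:ℝ))/2 * (3:ℕ) = -1 + (-1/2) by push_cast; ring, Real.rpow_add Real.pi_pos]
  rw [Real.rpow_neg_one]

lemma lamTF_sq : lamTF ^ 2 = 8 / Real.pi := by
  unfold lamTF
  rw [mul_pow, pow2_rpow, powpi_rpow]
  rw [div_eq_mul_inv]

lemma lamTF_cube : (Real.pi / 24) * lamTF ^ 3
    = 3⁻¹ * (2:ℝ) ^ ((3:ℝ)/2) * Real.pi ^ (-(1:ℝ)/2) := by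
  unfold lamTF
  rw [mul_pow, pow2_rpow3, powpi_rpow3]
  have h := Real.pi_ne_zero
  field_simp
  ring

open intervalIntegral in
lemma my_intint_id {a b : ℝ} : ∫ x in a..b, x = (b ^ 2 - a ^ 2) / 2 := integral_id

open intervalIntegral in
lemma my_intint_pow {a b : ℝ} {n : ℕ} :
    ∫ x in a..b, x ^ n = (b ^ (n + 1) - a ^ (n + 1)) / (n + 1) := integral_pow n

open intervalIntegral in
lemma my_intintegrable_id {a b : ℝ} {μ : MeasureTheory.Measure ℝ} [MeasureTheory.IsLocallyFiniteMeasure μ] :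
    IntervalIntegrable (fun x : ℝ => x) μ a b := intervalIntegrable_id

lemma uminTF_sq (p : ℝ × ℝ) :
    uminTF p ^ 2 = (1/4) * max (lamTF - (p.1 ^ 2 + p.2 ^ 2)) 0 := by
  unfold uminTF
  rw [mul_pow, Real.sq_sqrt (le_max_right _ 0)]
  norm_num


theorem uminTF_properties :
    (∫ p : ℝ × ℝ, uminTF p ^ 2) = 1 ∧
    (∫ p : ℝ × ℝ, ((1 / 2) * (p.1 ^ 2 + p.2 ^ 2) * uminTF p ^ 2 + uminTF p ^ 4))
      = (Real.pi / 24) * lamTF ^ 3 ∧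
    (Real.pi / 24) * lamTF ^ 3 = 3⁻¹ * (2 : ℝ) ^ ((3 : ℝ) / 2) * Real.pi ^ (-(1 : ℝ) / 2) := by
  have hlam := lamTF_pos
  have hmax : Continuous (fun s : ℝ => max (lamTF - s) 0) :=
    (continuous_const.sub continuous_id).max continuous_const
  refine ⟨?_, ?_, lamTF_cube⟩
  · have h1 := radial_integral lamTF hlam.le (fun s => (1/4) * max (lamTF - s) 0)
      (continuous_const.mul hmax)
      (fun s hs => by simp [max_eq_right (by linarith : lamTF - s ≤ 0)])
    simp only [uminTF_sq]
    rw [h1]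
    have hint : (∫ s in (0:ℝ)..lamTF, (1/4) * max (lamTF - s) 0)
        = ∫ s in (0:ℝ)..lamTF, (1/4) * (lamTF - s) := by
      apply intervalIntegral.integral_congr
      intro s hs
      rw [Set.uIcc_of_le hlam.le] at hs
      beta_reduce
      rw [max_eq_left (by linarith [hs.2] : (0:ℝ) ≤ lamTF - s)]
    rw [hint, intervalIntegral.integral_const_mul, intervalIntegral.integral_sub
      intervalIntegrable_const my_intintegrable_id,
      intervalIntegral.integral_const, my_intint_id]
    have h := lamTF_sq
    have hpi := Real.pi_pos
    simp only [smul_eq_mul, sub_zero]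
    field_simp at h ⊢
    nlinarith [h]
  · have h2 := radial_integral lamTF hlam.le
      (fun s => (1/2) * s * ((1/4) * max (lamTF - s) 0) + ((1/4) * max (lamTF - s) 0)^2)
      (((continuous_const.mul continuous_id).mul (continuous_const.mul hmax)).add
        ((continuous_const.mul hmax).pow 2))
      (fun s hs => by simp [max_eq_right (by linarith : lamTF - s ≤ 0)])
    have hpt : ∀ p : ℝ × ℝ, (1/2) * (p.1 ^ 2 + p.2 ^ 2) * uminTF p ^ 2 + uminTF p ^ 4
        = (1/2) * (p.1 ^ 2 + p.2 ^ 2) * ((1/4) * max (lamTF - (p.1 ^ 2 + p.2 ^ 2)) 0)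
          + ((1/4) * max (lamTF - (p.1 ^ 2 + p.2 ^ 2)) 0)^2 := by
      intro p
      rw [show uminTF p ^ 4 = (uminTF p ^ 2) ^ 2 by ring, uminTF_sq]
    simp only [hpt]
    rw [h2]
    have hint : (∫ s in (0:ℝ)..lamTF,
          ((1/2) * s * ((1/4) * max (lamTF - s) 0) + ((1/4) * max (lamTF - s) 0)^2))
        = ∫ s in (0:ℝ)..lamTF, (1/16) * (lamTF^2 - s^2) := by
      apply intervalIntegral.integral_congr
      intro s hs
      rw [Set.uIcc_of_le hlam.le] at hs
      beta_reduce
      rw [max_eq_left (by linarith [hs.2] : (0:ℝ) ≤ lamTF - s)]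
      ring
    rw [hint, intervalIntegral.integral_const_mul, intervalIntegral.integral_sub
      intervalIntegrable_const ((continuous_pow 2 : Continuous fun x : ℝ => x ^ 2).intervalIntegrable _ _),
      intervalIntegral.integral_const, my_intint_pow]
    simp only [smul_eq_mul, sub_zero]
    push_cast
    ring
end

section
/- For every L²-normalized u: ℝ² → ℝ, ∫_{ℝ²} ( (1/2)(x²+y²) u² + u⁴ ) dx dy ≥ 3^{-1} 2^{3/2} π^{-1/2}, so the inverted-parabola profile u_min(x,y) = (1/2)(2^{3/2}π^{-1/2} − x² − y²)_+^{1/2} is a global minimizer. -/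
open MeasureTheory Real Set

noncomputable def tfMu : ℝ := Real.sqrt (2 / Real.pi)

noncomputable def tfR : ℝ := Real.sqrt (2 * tfMu)

noncomputable def tfG (p : ℝ × ℝ) : ℝ := max (tfMu - (p.1 ^ 2 + p.2 ^ 2) / 2) 0 ^ 2 / 4

noncomputable def tfH (r : ℝ) : ℝ := r * (max (tfMu - r ^ 2 / 2) 0 ^ 2 / 4)

lemma tfMu_pos : 0 < tfMu := Real.sqrt_pos.2 (by positivity)

lemma tfMu_sq : tfMu ^ 2 = 2 / Real.pi := Real.sq_sqrt (by positivity)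

lemma tfG_nonneg (p : ℝ × ℝ) : 0 ≤ tfG p := by unfold tfG; positivity

lemma tfG_cont : Continuous tfG := by unfold tfG; fun_prop

lemma tfG_eq_zero {p : ℝ × ℝ} (h : 2 * tfMu ≤ p.1 ^ 2 + p.2 ^ 2) : tfG p = 0 := by
  unfold tfG
  rw [max_eq_right (by linarith)]
  simp

lemma tfH_cont : Continuous tfH := by unfold tfH; fun_prop

lemma tfH_eq_zero {r : ℝ} (h : tfR ≤ r) (hr : 0 ≤ r) : tfH r = 0 := by
  have hs := Real.sq_sqrt (show (0:ℝ) ≤ 2 * tfMu by have := tfMu_pos; positivity)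
  have hn := Real.sqrt_nonneg (2 * tfMu)
  have h2 : 2 * tfMu ≤ r ^ 2 := by unfold tfR at h; nlinarith
  unfold tfH
  rw [max_eq_right (by linarith)]
  simp

lemma tfR_nonneg : 0 ≤ tfR := Real.sqrt_nonneg _

lemma tfR_sq : tfR ^ 2 = 2 * tfMu := Real.sq_sqrt (by have := tfMu_pos; positivity)

lemma tfH_integrableOn : IntegrableOn tfH (Ioi 0) := by
  have h1 : IntegrableOn tfH (Ioc 0 tfR) := tfH_cont.integrableOn_Ioc
  have h2 : IntegrableOn tfH (Ioi tfR) := by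
    exact (integrableOn_congr_fun (g := fun _ => (0:ℝ))
      (fun r hr => tfH_eq_zero (le_of_lt hr) (tfR_nonneg.trans (le_of_lt hr)))
      measurableSet_Ioi).2 integrableOn_zero
  rw [← Ioc_union_Ioi_eq_Ioi tfR_nonneg]
  exact h1.union h2

lemma tfH_integral : ∫ r in Ioi (0:ℝ), tfH r = tfMu ^ 3 / 12 := by
  have h0 : ∫ r in Ioi tfR, tfH r = 0 := by
    rw [setIntegral_congr_fun measurableSet_Ioi
      (fun r hr => tfH_eq_zero (le_of_lt hr) (tfR_nonneg.trans (le_of_lt hr)))]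
    simp
  have h1 : IntegrableOn tfH (Ioc 0 tfR) := tfH_cont.integrableOn_Ioc
  have h2 : IntegrableOn tfH (Ioi tfR) := by
    exact (integrableOn_congr_fun (g := fun _ => (0:ℝ))
      (fun r hr => tfH_eq_zero (le_of_lt hr) (tfR_nonneg.trans (le_of_lt hr)))
      measurableSet_Ioi).2 integrableOn_zero
  rw [← Ioc_union_Ioi_eq_Ioi tfR_nonneg,
    setIntegral_union (Ioc_disjoint_Ioi le_rfl) measurableSet_Ioi h1 h2, h0, add_zero,
    ← intervalIntegral.integral_of_le tfR_nonneg]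
  have heq : EqOn tfH (fun r => r * (tfMu - r ^ 2 / 2) ^ 2 / 4) (uIcc 0 tfR) := by
    intro r hr
    rw [uIcc_of_le tfR_nonneg] at hr
    have hr2 : r ^ 2 ≤ 2 * tfMu := by
      have := tfR_sq
      nlinarith [hr.1, hr.2]
    unfold tfH
    rw [max_eq_left (by linarith)]
    ring
  rw [intervalIntegral.integral_congr heq]
  have hderiv : ∀ x ∈ uIcc (0:ℝ) tfR,
      HasDerivAt (fun r : ℝ => -(tfMu - r ^ 2 / 2) ^ 3 / 12)
        (x * (tfMu - x ^ 2 / 2) ^ 2 / 4) x := by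
    intro x _
    have hd : HasDerivAt (fun r : ℝ => tfMu - r ^ 2 / 2) (-x) x := by
      have := ((hasDerivAt_pow 2 x).div_const 2).const_sub tfMu
      simpa using this
    have := ((hd.pow 3).neg).div_const 12
    refine this.congr_deriv ?_
    push_cast
    ring
  have hint : IntervalIntegrable (fun r : ℝ => r * (tfMu - r ^ 2 / 2) ^ 2 / 4) volume 0 tfR :=
    (by fun_prop : Continuous fun r : ℝ => r * (tfMu - r ^ 2 / 2) ^ 2 / 4).intervalIntegrable _ _
  rw [intervalIntegral.integral_eq_sub_of_hasDerivAt hderiv hint]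
  rw [show tfR ^ 2 = 2 * tfMu from tfR_sq]
  ring

lemma tfG_integral : ∫ p, tfG p = Real.pi * tfMu ^ 3 / 6 := by
  rw [← integral_comp_polarCoord_symm tfG]
  have key : ∀ p : ℝ × ℝ, p.1 • tfG (polarCoord.symm p) = tfH p.1 * (1 : ℝ) := by
    intro p
    have h2 : (p.1 * Real.cos p.2) ^ 2 + (p.1 * Real.sin p.2) ^ 2 = p.1 ^ 2 := by
      linear_combination p.1 ^ 2 * Real.sin_sq_add_cos_sq p.2
    simp only [polarCoord_symm_apply, tfG, tfH, smul_eq_mul, h2, mul_one]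
  simp_rw [key]
  rw [polarCoord_target, Measure.volume_eq_prod, setIntegral_prod_mul tfH (fun _ => (1:ℝ)), tfH_integral]
  rw [setIntegral_const, measureReal_def, Real.volume_Ioo, smul_eq_mul, mul_one,
    ENNReal.toReal_ofReal (by linarith [Real.pi_pos])]
  ring

lemma tfG_integrable : Integrable tfG := by
  apply tfG_cont.integrable_of_hasCompactSupport
  apply HasCompactSupport.intro (isCompact_closedBall (0 : ℝ × ℝ) tfR)
  intro p hp
  apply tfG_eq_zero
  by_contra hlt
  push_neg at hlt
  apply hp
  simp only [Metric.mem_closedBall, dist_zero_right, Prod.norm_def, Real.norm_eq_abs]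
  have hs := tfR_sq
  apply max_le
  · rw [← Real.sqrt_sq_eq_abs, ← Real.sqrt_sq tfR_nonneg]
    apply Real.sqrt_le_sqrt
    nlinarith [sq_nonneg p.2]
  · rw [← Real.sqrt_sq_eq_abs, ← Real.sqrt_sq tfR_nonneg]
    apply Real.sqrt_le_sqrt
    nlinarith [sq_nonneg p.1]

theorem thomasFermi_2D_lower_bound (u : ℝ × ℝ → ℝ)
    (hnorm : (∫⁻ p : ℝ × ℝ, ENNReal.ofReal (u p ^ 2)) = 1) :
    (∫⁻ p : ℝ × ℝ, ENNReal.ofReal ((1 / 2) * (p.1 ^ 2 + p.2 ^ 2) * u p ^ 2 + u p ^ 4)) ≥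
      ENNReal.ofReal (3⁻¹ * (2 : ℝ) ^ ((3 : ℝ) / 2) * Real.pi ^ (-(1 : ℝ) / 2)) := by
  have hπ := Real.pi_pos
  have hμ := tfMu_pos
  have hpt : ∀ p : ℝ × ℝ, ENNReal.ofReal (tfMu * u p ^ 2)
      ≤ ENNReal.ofReal ((1 / 2) * (p.1 ^ 2 + p.2 ^ 2) * u p ^ 2 + u p ^ 4)
        + ENNReal.ofReal (tfG p) := by
    intro p
    rw [← ENNReal.ofReal_add (by positivity) (tfG_nonneg p)]
    apply ENNReal.ofReal_le_ofReal
    have hm1 : tfMu - (p.1 ^ 2 + p.2 ^ 2) / 2 ≤ max (tfMu - (p.1 ^ 2 + p.2 ^ 2) / 2) 0 :=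
      le_max_left _ _
    have hm2 : (0:ℝ) ≤ max (tfMu - (p.1 ^ 2 + p.2 ^ 2) / 2) 0 := le_max_right _ _
    unfold tfG
    nlinarith [sq_nonneg (u p ^ 2 - max (tfMu - (p.1 ^ 2 + p.2 ^ 2) / 2) 0 / 2),
      mul_nonneg (sub_nonneg.2 hm1) (sq_nonneg (u p))]
  have hmeasg : Measurable fun p : ℝ × ℝ => ENNReal.ofReal (tfG p) :=
    ENNReal.measurable_ofReal.comp tfG_cont.measurable
  have h1 : ENNReal.ofReal tfMu
      ≤ (∫⁻ p : ℝ × ℝ, ENNReal.ofReal ((1 / 2) * (p.1 ^ 2 + p.2 ^ 2) * u p ^ 2 + u p ^ 4))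
        + ENNReal.ofReal (Real.pi * tfMu ^ 3 / 6) := by
    calc ENNReal.ofReal tfMu = ∫⁻ p : ℝ × ℝ, ENNReal.ofReal (tfMu * u p ^ 2) := by
          simp_rw [ENNReal.ofReal_mul hμ.le]
          rw [lintegral_const_mul' _ _ ENNReal.ofReal_ne_top, hnorm, mul_one]
      _ ≤ ∫⁻ p : ℝ × ℝ, (ENNReal.ofReal ((1 / 2) * (p.1 ^ 2 + p.2 ^ 2) * u p ^ 2 + u p ^ 4)
            + ENNReal.ofReal (tfG p)) := lintegral_mono hpt
      _ = (∫⁻ p : ℝ × ℝ, ENNReal.ofReal ((1 / 2) * (p.1 ^ 2 + p.2 ^ 2) * u p ^ 2 + u p ^ 4))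
            + ∫⁻ p : ℝ × ℝ, ENNReal.ofReal (tfG p) := lintegral_add_right _ hmeasg
      _ = _ := by
          rw [← ofReal_integral_eq_lintegral_ofReal tfG_integrable
            (Filter.Eventually.of_forall tfG_nonneg), tfG_integral]
  have hc : 3⁻¹ * (2 : ℝ) ^ ((3 : ℝ) / 2) * Real.pi ^ (-(1 : ℝ) / 2)
      = tfMu - Real.pi * tfMu ^ 3 / 6 := by
    have hs2 : Real.sqrt 2 ^ 2 = 2 := Real.sq_sqrt (by norm_num)
    have hsπ : Real.sqrt Real.pi ^ 2 = Real.pi := Real.sq_sqrt hπ.le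
    have hsπ0 : 0 < Real.sqrt Real.pi := Real.sqrt_pos.2 hπ
    have hμ' : tfMu = Real.sqrt 2 / Real.sqrt Real.pi := by
      rw [tfMu, Real.sqrt_div (by norm_num)]
    rw [show (3:ℝ)/2 = 1 + 1/2 by norm_num, Real.rpow_add (by norm_num), Real.rpow_one,
      show -(1:ℝ)/2 = -(1/2) by norm_num, Real.rpow_neg hπ.le,
      ← Real.sqrt_eq_rpow, ← Real.sqrt_eq_rpow, hμ']
    field_simp
    linear_combination (-6) * hsπ
      + (3 * Real.pi) * hs2
  rw [ge_iff_le, hc, ENNReal.ofReal_sub _ (by positivity), tsub_le_iff_right]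
  exact h1
end

section
/- In the N = 2 DNLS Floquet problem with τ cos k ≠ 0 and |g₁| ≠ |g₂|: the critical point equations 2I|g₁|²g₁ − 2τ cos(k) g₂ = μg₁, 2I|g₂|²g₂ − 2τ cos(k) g₁ = μg₂ together with |g₁|² + |g₂|² = 2ν force sin(φ₂ − φ₁) = 0 (where g_j = |g_j| e^{iφ_j}), the relation 2I|g₁||g₂| = ±2τ cos k, hence the necessary condition |τ cos k| ≤ Iν, and in that case μ = 4Iν and the energy per particle is E = (τ²/(Iν)) cos² k + 2Iν. -/
open Complex

theorem dnls_N_eq_two (tau I nu k mu phi1 phi2 : ℝ)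
    (htau : 0 ≤ tau) (hI : 0 < I) (hnu : 0 < nu)
    (g1 g2 : ℂ) (hg1 : g1 ≠ 0) (hg2 : g2 ≠ 0)
    (hpol1 : g1 = (‖g1‖ : ℂ) * Complex.exp (Complex.I * phi1))
    (hpol2 : g2 = (‖g2‖ : ℂ) * Complex.exp (Complex.I * phi2))
    (hdeg : tau * Real.cos k ≠ 0)
    (hneq : ‖g1‖ ≠ ‖g2‖)
    (heq1 : 2 * (I : ℂ) * (‖g1‖ ^ 2 : ℝ) * g1
        - 2 * (tau : ℂ) * (Real.cos k : ℝ) * g2 = (mu : ℂ) * g1)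
    (heq2 : 2 * (I : ℂ) * (‖g2‖ ^ 2 : ℝ) * g2
        - 2 * (tau : ℂ) * (Real.cos k : ℝ) * g1 = (mu : ℂ) * g2)
    (hnorm : ‖g1‖ ^ 2 + ‖g2‖ ^ 2 = 2 * nu) :
    Real.sin (phi2 - phi1) = 0 ∧
    (2 * I * (‖g1‖ * ‖g2‖) = 2 * tau * Real.cos k ∨
      2 * I * (‖g1‖ * ‖g2‖) = -(2 * tau * Real.cos k)) ∧
    |tau * Real.cos k| ≤ I * nu ∧
    mu = 4 * I * nu ∧
    (-2 * tau * Real.cos k * (g1 * (starRingEnd ℂ) g2 + g2 * (starRingEnd ℂ) g1).re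
        + I * (‖g1‖ ^ 4 + ‖g2‖ ^ 4)) / (2 * nu) =
      tau ^ 2 / (I * nu) * Real.cos k ^ 2 + 2 * I * nu := by
  set r1 := ‖g1‖ with hr1def
  set r2 := ‖g2‖ with hr2def
  have hr1 : 0 < r1 := norm_pos_iff.mpr hg1
  have hr2 : 0 < r2 := norm_pos_iff.mpr hg2
  set t := tau * Real.cos k with htdef
  have ht : t ≠ 0 := hdeg
  set z := g1 * (starRingEnd ℂ) g2 with hzdef
  have hc1 : g1 * (starRingEnd ℂ) g1 = ((r1 ^ 2 : ℝ) : ℂ) := by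
    rw [Complex.mul_conj]; norm_cast; exact (Complex.sq_norm g1).symm
  have hc2 : g2 * (starRingEnd ℂ) g2 = ((r2 ^ 2 : ℝ) : ℂ) := by
    rw [Complex.mul_conj]; norm_cast; exact (Complex.sq_norm g2).symm
  have hconj : g2 * (starRingEnd ℂ) g1 = (starRingEnd ℂ) z := by
    rw [hzdef, map_mul, Complex.conj_conj]; ring
  have htC : ((t : ℝ) : ℂ) = (tau : ℂ) * ((Real.cos k : ℝ) : ℂ) := by
    rw [htdef]; push_cast; ring
  have key2 : (((2 * t : ℝ)) : ℂ) * z = ((((2 * I * r2 ^ 2 - mu) * r2 ^ 2) : ℝ) : ℂ) := by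
    rw [hzdef]
    linear_combination (norm := (push_cast; ring1)) (-(starRingEnd ℂ) g2) * heq2 +
      (2 * (I : ℂ) * ((r2 ^ 2 : ℝ) : ℂ) - (mu : ℂ)) * hc2 +
      (2 * g1 * (starRingEnd ℂ) g2) * htC
  have key1 : (((2 * t : ℝ)) : ℂ) * (starRingEnd ℂ) z =
      ((((2 * I * r1 ^ 2 - mu) * r1 ^ 2) : ℝ) : ℂ) := by
    rw [← hconj]
    linear_combination (norm := (push_cast; ring1)) (-(starRingEnd ℂ) g1) * heq1 +
      (2 * (I : ℂ) * ((r1 ^ 2 : ℝ) : ℂ) - (mu : ℂ)) * hc1 +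
      (2 * g2 * (starRingEnd ℂ) g1) * htC
  have him0 : z.im = 0 := by
    have h := congrArg Complex.im key2
    simp only [Complex.mul_im, Complex.ofReal_re, Complex.ofReal_im, zero_mul, mul_zero,
      add_zero, zero_add] at h
    rcases mul_eq_zero.mp h with h' | h'
    · exact absurd h' (by positivity)
    · exact h'
  have E2 : 2 * t * z.re = (2 * I * r2 ^ 2 - mu) * r2 ^ 2 := by
    have h := congrArg Complex.re key2
    simpa only [Complex.mul_re, Complex.ofReal_re, Complex.ofReal_im, zero_mul, mul_zero,
      sub_zero] using h
  have E1 : 2 * t * z.re = (2 * I * r1 ^ 2 - mu) * r1 ^ 2 := by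
    have h := congrArg Complex.re key1
    simpa only [Complex.mul_re, Complex.ofReal_re, Complex.ofReal_im, Complex.conj_re,
      Complex.conj_im, zero_mul, mul_zero, sub_zero] using h
  have h12 : r1 ^ 2 - r2 ^ 2 ≠ 0 := by
    intro h
    apply hneq
    have hfac : (r1 - r2) * (r1 + r2) = 0 := by linear_combination h
    rcases mul_eq_zero.mp hfac with h' | h'
    · linarith
    · linarith
  have hmu2 : mu = 2 * I * (r1 ^ 2 + r2 ^ 2) := by
    have key : mu * (r1 ^ 2 - r2 ^ 2) = 2 * I * (r1 ^ 2 + r2 ^ 2) * (r1 ^ 2 - r2 ^ 2) := by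
      linear_combination E1 - E2
    exact mul_right_cancel₀ h12 key
  have htw : t * z.re = -(I * (r1 ^ 2 * r2 ^ 2)) := by
    linear_combination (1 / 2) * E1 - (r1 ^ 2 / 2) * hmu2
  have habsz : ‖z‖ = r1 * r2 := by
    rw [hzdef, norm_mul, Complex.norm_conj]
  have hw2 : z.re ^ 2 = r1 ^ 2 * r2 ^ 2 := by
    have h := Complex.sq_norm z
    rw [Complex.normSq_apply, him0, habsz] at h
    linear_combination -h
  have hr12 : r1 ^ 2 * r2 ^ 2 ≠ 0 := by positivity
  have ht2 : t ^ 2 = I ^ 2 * (r1 ^ 2 * r2 ^ 2) := by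
    apply mul_right_cancel₀ hr12
    linear_combination (t * z.re - I * (r1 ^ 2 * r2 ^ 2)) * htw - t ^ 2 * hw2
  have himval : z.im = r1 * r2 * Real.sin (phi1 - phi2) := by
    rw [hzdef, hpol1, hpol2]
    rw [mul_comm Complex.I ((phi1 : ℝ) : ℂ), mul_comm Complex.I ((phi2 : ℝ) : ℂ)]
    rw [Complex.exp_mul_I, Complex.exp_mul_I]
    simp only [← Complex.ofReal_cos, ← Complex.ofReal_sin, map_add, map_mul,
      Complex.conj_ofReal, Complex.conj_I, Complex.mul_im, Complex.mul_re,
      Complex.add_re, Complex.add_im, Complex.ofReal_re, Complex.ofReal_im,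
      Complex.I_re, Complex.I_im, Complex.neg_re, Complex.neg_im]
    rw [Real.sin_sub]
    ring
  have hsin : Real.sin (phi2 - phi1) = 0 := by
    have h : r1 * r2 * Real.sin (phi1 - phi2) = 0 := by rw [← himval, him0]
    have h2 : Real.sin (phi1 - phi2) = 0 := by
      rcases mul_eq_zero.mp h with h' | h'
      · exact absurd h' (by positivity)
      · exact h'
    rw [show phi2 - phi1 = -(phi1 - phi2) by ring, Real.sin_neg, h2, neg_zero]
  refine ⟨hsin, ?_, ?_, ?_, ?_⟩
  · have hfac : (2 * I * (r1 * r2) - 2 * t) * (2 * I * (r1 * r2) + 2 * t) = 0 := by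
      linear_combination -4 * ht2
    rcases mul_eq_zero.mp hfac with h | h
    · left; linear_combination h + 2 * htdef
    · right; linear_combination h - 2 * htdef
  · have h1 : r1 * r2 ≤ nu := by nlinarith [sq_nonneg (r1 - r2)]
    have h2 : t ^ 2 ≤ (I * nu) ^ 2 := by
      have hp : 0 < r1 * r2 := mul_pos hr1 hr2
      have hq := mul_le_mul h1 h1 hp.le hnu.le
      nlinarith [ht2, sq_nonneg I]
    nlinarith [_root_.sq_abs t, abs_nonneg t, mul_pos hI hnu]
  · linear_combination hmu2 + 2 * I * hnorm
  · have hre : (z + g2 * (starRingEnd ℂ) g1).re = 2 * z.re := by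
      rw [Complex.add_re, hconj, Complex.conj_re]; ring
    rw [hre]
    have hInu : I * nu ≠ 0 := by positivity
    have h2nu : (2 : ℝ) * nu ≠ 0 := by positivity
    field_simp
    linear_combination (-4 * I) * htw + (-2) * ht2 +
      (I ^ 2 * (r1 ^ 2 + r2 ^ 2 + 2 * nu)) * hnorm +
      (4 * z.re * I + 2 * (t + tau * Real.cos k)) * htdef
end
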